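/- arXiv:1404.0528 — 3 statements merged into one kernel-verified Lean document; each statement's English description precedes it below -/
import Mathlib

section
/- Let v ≥ 5 with v ≡ 1 or 5 (mod 6). Then the multiset B of blocks {k, k + α, k − α} ⊆ ZMod v, taken over all 1 ≤ α ≤ (v−1)/2 and all k ∈ ZMod v, is a cyclic, simple, and indecomposable three-fold triple system TS_3(v): every 2-element subset of ZMod v lies in exactly 3 of these blocks, the blocks are pairwise distinct, B is invariant under the translation x ↦ x + 1, and B admits no decomposition into an STS(v) and a TS_2(v). -/
/-!
Write `block k a = {k, k + a, k - a}`. Since `2` and `3` are units in `ZMod v`, a block determines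
its centre `k` (its elements sum to `3 k`) and its difference `a` up to sign, and a pair `{x, y}`
lies exactly in the blocks centred at `x`, `y` and `(x + y) / 2` with the matching difference.
As `a` runs over one representative of each pair `±δ`, the blocks are distinct and every pair is
covered three times.

If a sub-multiset `S` were a Steiner triple system, let `m δ` be the number of its blocks with
difference `±δ`. A block with difference `a` contains the differences `±a` twice each and `±2a`
once, so counting the pairs `{x, x + 2δ}` covered by `S` gives `2 m (2δ) + m δ = v`. Hence
`3 m δ - v = -2 (3 m (2δ) - v)` for all `δ ≠ 0`, so `3 m δ - v` is divisible by every power of `2`,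
hence zero, contradicting `3 ∤ v`.
-/

/-- A `λ`-fold triple system on `ZMod v`. -/
def IsTS (v lam : ℕ) (B : Multiset (Finset (ZMod v))) : Prop :=
  (∀ b ∈ B, b.card = 3) ∧
  ∀ p : Finset (ZMod v), p.card = 2 → B.countP (fun b => p ⊆ b) = lam

/-- A design on `ZMod v` is cyclic if `x ↦ x + 1` maps it to itself. -/
def IsCyclicDesign (v : ℕ) (B : Multiset (Finset (ZMod v))) : Prop :=
  B.map (fun b => b.image (fun x => x + 1)) = B

/-- Kramer's blocks: `{k, k + α, k - α}` for `1 ≤ α ≤ (v-1)/2` and `k ∈ ZMod v`. -/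
def kramerBlocks (v : ℕ) : Multiset (Finset (ZMod v)) :=
  (Multiset.range v).bind fun k =>
    (Multiset.Icc 1 ((v - 1) / 2)).map fun a =>
      ({(k : ZMod v), (k : ZMod v) + (a : ZMod v), (k : ZMod v) - (a : ZMod v)} :
        Finset (ZMod v))

open Finset

lemma Multiset.sum_map_boole {β : Type*} (s : Multiset β) (p : β → Prop) [DecidablePred p] :
    (s.map fun b => if p b then 1 else 0).sum = s.countP p := by
  induction s using Multiset.induction_on with
  | empty => simp
  | cons b s ih => simp [Multiset.countP_cons, ih, add_comm]

lemma Multiset.sum_countP_eq_sum_map_card_filter {ι β : Type*} (F : Finset ι) (s : Multiset β)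
    (p : ι → β → Prop) [∀ i b, Decidable (p i b)] :
    ∑ i ∈ F, s.countP (p i) = (s.map fun b => #{i ∈ F | p i b}).sum := by
  induction s using Multiset.induction_on with
  | empty => simp
  | cons b s ih =>
    simp only [Multiset.countP_cons, Multiset.map_cons, Multiset.sum_cons]
    rw [sum_add_distrib, ih, sum_boole, Nat.cast_id, add_comm]

lemma Int.eq_zero_of_forall_eq_neg_two_mul {α : Type*} {P : α → Prop} {g : α → α} {m : α → ℤ}
    (hg : ∀ x, P x → P (g x)) (hm : ∀ x, P x → m x = -2 * m (g x)) {x : α} (hx : P x) :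
    m x = 0 := by
  have hdvd : ∀ n x, P x → 2 ^ n ∣ m x := by
    intro n
    induction n with
    | zero => simp
    | succ n ih =>
      intro x hx
      rw [hm x hx, pow_succ', neg_mul]
      exact (mul_dvd_mul_left 2 (ih _ (hg x hx))).neg_right
  exact Int.eq_zero_of_dvd_of_natAbs_lt_natAbs (hdvd _ x hx)
    (by simpa [Int.natAbs_pow] using Nat.lt_two_pow_self)

namespace Kramer
section Block
variable {R : Type*} [CommRing R] [DecidableEq R] {k k' a b x y δ : R}

def block (k a : R) : Finset R := {k, k + a, k - a}

@[simp] lemma mem_block : x ∈ block k a ↔ x = k ∨ x = k + a ∨ x = k - a := by simp [block]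

lemma block_neg (k a : R) : block k (-a) = block k a := by
  ext x; simp only [mem_block, ← sub_eq_add_neg, sub_neg_eq_add]; tauto

lemma image_add_block (k a c : R) : (block k a).image (· + c) = block (k + c) a := by
  simp only [block, image_insert, image_singleton]; ring_nf

lemma block_zero (k : R) : block k 0 = {k} := by simp [block]

lemma sum_block {M : Type*} [AddCommMonoid M] (h2 : IsUnit (2 : R)) (ha : a ≠ 0) (f : R → M) :
    ∑ x ∈ block k a, f x = f k + f (k + a) + f (k - a) := by
  have h2a : 2 * a ≠ 0 := by rwa [Ne, h2.mul_right_eq_zero]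
  rw [block, sum_insert (by grind), sum_insert (by grind), sum_singleton, add_assoc]

lemma card_block (h2 : IsUnit (2 : R)) (ha : a ≠ 0) : (block k a).card = 3 := by
  rw [card_eq_sum_ones, sum_block h2 ha]

lemma block_eq_block_iff (h2 : IsUnit (2 : R)) (h3 : IsUnit (3 : R)) (ha : a ≠ 0) :
    block k a = block k' b ↔ k = k' ∧ (b = a ∨ b = -a) := by
  constructor
  · intro h
    have hb : b ≠ 0 := by
      rintro rfl
      simpa [block_zero, card_block h2 ha] using congrArg card h
    have hk : k = k' := h3.mul_left_cancel <| by
      have := congrArg (∑ x ∈ ·, x) h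
      simp only [sum_block h2 ha, sum_block h2 hb] at this
      linear_combination this
    subst hk
    have : k + a ∈ block k b := h ▸ by simp
    simp only [mem_block] at this
    grind
  · rintro ⟨rfl, rfl | rfl⟩
    · rfl
    · exact (block_neg k a).symm

lemma mem_block_and_mem_block_iff (h2 : IsUnit (2 : R)) (hxy : x ≠ y) :
    x ∈ block k a ∧ y ∈ block k a ↔
      (k = x ∨ k = y) ∧ (a = y - x ∨ a = x - y) ∨
        2 * k = x + y ∧ (2 * a = y - x ∨ 2 * a = x - y) := by
  simp only [mem_block]
  constructor
  · grind
  rintro (⟨hk, ha⟩ | ⟨hk, ha | ha⟩)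
  · grind
  · have : k + a = y := h2.mul_left_cancel (by linear_combination hk + ha)
    have : k - a = x := h2.mul_left_cancel (by linear_combination hk - ha)
    grind
  · have : k + a = x := h2.mul_left_cancel (by linear_combination hk + ha)
    have : k - a = y := h2.mul_left_cancel (by linear_combination hk - ha)
    grind

lemma card_filter_add_two_mul_mem_block (h2 : IsUnit (2 : R)) (h3 : IsUnit (3 : R)) (ha : a ≠ 0)
    (hδ : δ ≠ 0) :
    #{x ∈ block k a | x + 2 * δ ∈ block k a} =
      2 * (if 2 * δ = a ∨ 2 * δ = -a then 1 else 0) + if δ = a ∨ δ = -a then 1 else 0 := by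
  have h2a : 2 * a ≠ 0 := by rwa [Ne, h2.mul_right_eq_zero]
  have h3a : 3 * a ≠ 0 := by rwa [Ne, h3.mul_right_eq_zero]
  have h2δ : 2 * δ ≠ 0 := by rwa [Ne, h2.mul_right_eq_zero]
  have e1 : 2 * δ = 2 * a ↔ δ = a := h2.mul_right_inj
  have e2 : 2 * δ = 2 * -a ↔ δ = -a := h2.mul_right_inj
  have hcentre : k + 2 * δ ∈ block k a ↔ 2 * δ = a ∨ 2 * δ = -a := by
    simp only [mem_block]; grind
  have hplus : k + a + 2 * δ ∈ block k a ↔ 2 * δ = -a ∨ δ = -a := by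
    simp only [mem_block]; grind
  have hminus : k - a + 2 * δ ∈ block k a ↔ 2 * δ = a ∨ δ = a := by
    simp only [mem_block]; grind
  simp only [card_filter, sum_block h2 ha, hcentre, hplus, hminus]
  split_ifs <;> grind

lemma exists_block_eq_iff (h2 : IsUnit (2 : R)) (h3 : IsUnit (3 : R)) (ha : a ≠ 0) :
    (∃ k', block k a = block k' b) ↔ b = a ∨ b = -a := by
  simp only [block_eq_block_iff h2 h3 ha, exists_eq_left']

end Block

section HalfSystem
variable {R : Type*} [CommRing R] {D : Finset R} {a b δ x y : R}

def IsHalfSystem (D : Finset R) : Prop := 0 ∉ D ∧ ∀ δ ≠ 0, (δ ∈ D ↔ -δ ∉ D)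

lemma IsHalfSystem.ne_zero (hD : IsHalfSystem D) (ha : a ∈ D) : a ≠ 0 :=
  ne_of_mem_of_not_mem ha hD.1

lemma IsHalfSystem.eq_of_eq_or_eq_neg (hD : IsHalfSystem D) (ha : a ∈ D) (hb : b ∈ D)
    (h : b = a ∨ b = -a) : b = a := by
  have := hD.2 a (hD.ne_zero ha)
  grind

lemma IsHalfSystem.card_filter_eq_or_eq_neg [DecidableEq R] (hD : IsHalfSystem D) (hδ : δ ≠ 0) :
    #{a ∈ D | a = δ ∨ a = -δ} = 1 := by
  have := hD.2 δ hδ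
  rw [card_eq_one]
  by_cases h : δ ∈ D
  exacts [⟨δ, by ext; grind⟩, ⟨-δ, by ext; grind⟩]

lemma card_filter_mem_block_and_mem_block [DecidableEq R] (h2 : IsUnit (2 : R))
    (hD : IsHalfSystem D) (hxy : x ≠ y) (k : R) :
    #{a ∈ D | x ∈ block k a ∧ y ∈ block k a} =
      if k = x ∨ k = y ∨ 2 * k = x + y then 1 else 0 := by
  simp only [mem_block_and_mem_block_iff h2 hxy]
  have hyx : y - x ≠ 0 := sub_ne_zero.mpr hxy.symm
  by_cases hk : k = x ∨ k = y
  · rw [if_pos (by tauto)]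
    refine (congrArg card (filter_congr fun a _ => ?_)).trans (hD.card_filter_eq_or_eq_neg hyx)
    grind
  by_cases hm : 2 * k = x + y
  · rw [if_pos (by tauto)]
    refine (congrArg card (filter_congr fun a _ => ?_)).trans
      (hD.card_filter_eq_or_eq_neg (δ := y - k) (by grind))
    have e1 : 2 * a = 2 * (y - k) ↔ a = y - k := h2.mul_right_inj
    have e2 : 2 * a = 2 * -(y - k) ↔ a = -(y - k) := h2.mul_right_inj
    grind
  · rw [if_neg (by tauto), card_eq_zero, filter_eq_empty_iff]
    tauto

end HalfSystem

section Design
variable {R : Type*} [CommRing R] [DecidableEq R] [Fintype R] {D : Finset R} {x y : R}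

def kramerDesign (D : Finset R) : Multiset (Finset R) :=
  univ.val.bind fun k => D.val.map (block k)

lemma mem_kramerDesign {b : Finset R} : b ∈ kramerDesign D ↔ ∃ k, ∃ a ∈ D, block k a = b := by
  simp [kramerDesign]

lemma countP_kramerDesign (p : Finset R → Prop) [DecidablePred p] :
    (kramerDesign D).countP p = ∑ k, #{a ∈ D | p (block k a)} := by
  simp only [kramerDesign, Multiset.countP_eq_card_filter, Multiset.filter_bind,
    Multiset.filter_map, Function.comp_apply, Multiset.card_bind, Multiset.card_map, sum_map_val]
  rfl

lemma countP_pair_subset_kramerDesign (h2 : IsUnit (2 : R)) (hD : IsHalfSystem D)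
    (hxy : x ≠ y) : (kramerDesign D).countP (fun b => {x, y} ⊆ b) = 3 := by
  obtain ⟨u, hu⟩ := h2.exists_right_inv
  simp only [insert_subset_iff, singleton_subset_iff, countP_kramerDesign,
    card_filter_mem_block_and_mem_block h2 hD hxy, sum_boole, Nat.cast_id]
  have hcentres : ({k | k = x ∨ k = y ∨ 2 * k = x + y} : Finset R) = {x, y, u * (x + y)} := by
    ext k
    simp only [mem_filter, mem_univ, true_and, mem_insert, mem_singleton]
    have hmid : 2 * k = x + y ↔ k = u * (x + y) := by
      constructor <;> intro h
      · linear_combination u * h - k * hu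
      · linear_combination 2 * h + (x + y) * hu
    rw [hmid]
  rw [hcentres, card_eq_three]
  refine ⟨x, y, u * (x + y), hxy, ?_, ?_, rfl⟩
  · intro h; apply hxy; linear_combination 2 * h + (x + y) * hu
  · intro h; apply hxy; linear_combination -(2 * h) - (x + y) * hu

lemma card_of_mem_kramerDesign (h2 : IsUnit (2 : R)) (hD : IsHalfSystem D) {b : Finset R}
    (hb : b ∈ kramerDesign D) : b.card = 3 := by
  obtain ⟨k, a, ha, rfl⟩ := mem_kramerDesign.mp hb
  exact card_block h2 (hD.ne_zero ha)

lemma nodup_kramerDesign (h2 : IsUnit (2 : R)) (h3 : IsUnit (3 : R)) (hD : IsHalfSystem D) :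
    (kramerDesign D).Nodup := by
  refine Multiset.nodup_bind.mpr ⟨fun k _ => D.nodup.map_on fun a ha b hb h => ?_,
    univ.nodup.pairwise fun k _ k' _ hkk' => ?_⟩
  · exact (hD.eq_of_eq_or_eq_neg ha hb ((block_eq_block_iff h2 h3 (hD.ne_zero ha)).mp h).2).symm
  · simp only [Function.onFun, Multiset.disjoint_left, Multiset.mem_map]
    rintro _ ⟨a, ha, rfl⟩ ⟨b, -, h⟩
    exact hkk' ((block_eq_block_iff h2 h3 (hD.ne_zero ha)).mp h.symm).1

lemma map_image_add_kramerDesign (c : R) :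
    (kramerDesign D).map (fun b => b.image (· + c)) = kramerDesign D := by
  simp only [kramerDesign, Multiset.map_bind, Multiset.map_map, Function.comp_def, image_add_block]
  rw [← Multiset.bind_map univ.val (fun k => D.val.map (block k)) (· + c)]
  exact congrArg (·.bind fun k => D.val.map (block k))
    (Multiset.map_univ_val_equiv (Equiv.addRight c))

lemma two_mul_countP_add_countP_eq_card (h2 : IsUnit (2 : R)) (h3 : IsUnit (3 : R))
    (hD : IsHalfSystem D) {B : Multiset (Finset R)} (hB : B ≤ kramerDesign D)
    (hB1 : ∀ x y : R, x ≠ y → B.countP (fun b => {x, y} ⊆ b) = 1) {δ : R} (hδ : δ ≠ 0) :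
    2 * B.countP (fun b => ∃ k, b = block k (2 * δ)) + B.countP (fun b => ∃ k, b = block k δ) =
      Fintype.card R := by
  have h2δ : 2 * δ ≠ 0 := by rwa [Ne, h2.mul_right_eq_zero]
  calc _ = (B.map fun b => #{x ∈ b | x + 2 * δ ∈ b}).sum := by
        rw [← Multiset.sum_map_boole, ← Multiset.sum_map_boole, ← Multiset.sum_map_mul_left,
          ← Multiset.sum_map_add]
        refine congrArg _ (Multiset.map_congr rfl fun b hb => ?_)
        obtain ⟨k, a, ha, rfl⟩ := mem_kramerDesign.mp (Multiset.mem_of_le hB hb)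
        simp only [card_filter_add_two_mul_mem_block h2 h3 (hD.ne_zero ha) hδ,
          exists_block_eq_iff h2 h3 (hD.ne_zero ha)]
    _ = ∑ x, B.countP (fun b => {x, x + 2 * δ} ⊆ b) := by
        rw [Multiset.sum_countP_eq_sum_map_card_filter]
        congr! 3 with b
        ext x
        simp [insert_subset_iff]
    _ = ∑ _x : R, 1 := sum_congr rfl fun x _ => hB1 _ _ (by simpa using h2δ)
    _ = Fintype.card R := by simp

theorem not_forall_countP_pair_eq_one_of_le_kramerDesign [Nontrivial R] (h2 : IsUnit (2 : R))
    (h3 : IsUnit (3 : R)) (hD : IsHalfSystem D) {B : Multiset (Finset R)}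
    (hB : B ≤ kramerDesign D) : ¬ ∀ x y : R, x ≠ y → B.countP (fun b => {x, y} ⊆ b) = 1 := by
  intro hB1
  set m : R → ℤ := fun δ => 3 * B.countP (fun b => ∃ k, b = block k δ) - Fintype.card R
  have hrec : ∀ δ : R, δ ≠ 0 → m δ = -2 * m (2 * δ) := fun δ hδ => by
    have := two_mul_countP_add_countP_eq_card h2 h3 hD hB hB1 hδ
    simp only [m]
    omega
  have hm : m 1 = 0 := Int.eq_zero_of_forall_eq_neg_two_mul
    (fun δ hδ => by rwa [Ne, h2.mul_right_eq_zero]) hrec one_ne_zero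
  have : Fact (Nat.Prime 3) := ⟨Nat.prime_three⟩
  have hcard : Fintype.card R = 3 * B.countP (fun b => ∃ k, b = block k 1) := by
    simp only [m] at hm
    omega
  exact not_isUnit_prime_of_dvd_card ⟨_, hcard⟩ (by exact_mod_cast h3)

end Design

section ZMod
variable {v : ℕ}

lemma injOn_natCast_range : Set.InjOn (Nat.cast : ℕ → ZMod v) (range v) := by
  intro a ha b hb h
  rw [coe_range, Set.mem_Iio] at ha hb
  have : NeZero v := ⟨by omega⟩
  simpa [ZMod.val_cast_of_lt ha, ZMod.val_cast_of_lt hb] using congrArg ZMod.val h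

lemma map_natCast_range [NeZero v] :
    (Multiset.range v).map (Nat.cast : ℕ → ZMod v) = univ.val := by
  have himage : (range v).image (Nat.cast : ℕ → ZMod v) = univ :=
    eq_univ_of_card _ (by rw [card_image_of_injOn injOn_natCast_range, card_range, ZMod.card])
  exact (image_val_of_injOn injOn_natCast_range).symm.trans (congrArg val himage)

def lowerHalf (v : ℕ) : Finset (ZMod v) := (Icc 1 ((v - 1) / 2)).image Nat.cast

lemma mem_lowerHalf [NeZero v] {δ : ZMod v} :
    δ ∈ lowerHalf v ↔ 1 ≤ δ.val ∧ δ.val ≤ (v - 1) / 2 := by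
  constructor
  · intro hδ
    obtain ⟨a, ha, rfl⟩ := mem_image.mp hδ
    rw [mem_Icc] at ha
    rwa [ZMod.val_cast_of_lt (by omega)]
  · exact fun h => mem_image.mpr ⟨δ.val, mem_Icc.mpr h, ZMod.natCast_zmod_val δ⟩

lemma isHalfSystem_lowerHalf (hv : Odd v) : IsHalfSystem (lowerHalf v) := by
  have hv2 := Nat.odd_iff.mp hv
  have : NeZero v := ⟨by omega⟩
  refine ⟨by simp [mem_lowerHalf], fun δ hδ => ?_⟩
  have := ZMod.val_lt δ
  have := (ZMod.val_ne_zero δ).mpr hδ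
  rw [mem_lowerHalf, mem_lowerHalf, ZMod.neg_val, if_neg hδ]
  omega

-- In `kramerBlocks`, `Multiset.Icc 1 ((v - 1) / 2)` is coerced to `Multiset (ZMod v)` through the
-- multiset monad, hence the `>>=` below.
lemma kramerBlocks_eq_kramerDesign [NeZero v] : kramerBlocks v = kramerDesign (lowerHalf v) := by
  have hhalf :
      (Multiset.Icc 1 ((v - 1) / 2) >>= fun a => pure (a : ZMod v)) = (lowerHalf v).val := by
    rw [lowerHalf, image_val_of_injOn (injOn_natCast_range.mono ?_)]
    · simp only [Multiset.pure_def, Multiset.bind_def, Multiset.bind_singleton]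
      rfl
    · intro a ha
      simp only [coe_Icc, Set.mem_Icc, coe_range, Set.mem_Iio] at ha ⊢
      omega
  unfold kramerBlocks
  rw [hhalf, kramerDesign, ← map_natCast_range, Multiset.bind_map]
  rfl

end ZMod
end Kramer

open Kramer

theorem kramer_TS3_cyclic_simple_indecomposable (v : ℕ) (hv : 5 ≤ v)
    (hmod : v % 6 = 1 ∨ v % 6 = 5) :
    IsTS v 3 (kramerBlocks v) ∧ (kramerBlocks v).Nodup ∧
    IsCyclicDesign v (kramerBlocks v) ∧
    ¬ ∃ B₁ B₂ : Multiset (Finset (ZMod v)),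
      kramerBlocks v = B₁ + B₂ ∧ IsTS v 1 B₁ ∧ IsTS v 2 B₂ := by
  have : NeZero v := ⟨by omega⟩
  have : Nontrivial (ZMod v) := ZMod.nontrivial_iff.mpr (by omega)
  have h2 : IsUnit (2 : ZMod v) := by
    exact_mod_cast ZMod.isUnit_prime_of_not_dvd Nat.prime_two (by omega)
  have h3 : IsUnit (3 : ZMod v) := by
    exact_mod_cast ZMod.isUnit_prime_of_not_dvd Nat.prime_three (by omega)
  have hD : IsHalfSystem (lowerHalf v) := isHalfSystem_lowerHalf (Nat.odd_iff.mpr (by omega))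
  rw [kramerBlocks_eq_kramerDesign]
  refine ⟨⟨fun b hb => card_of_mem_kramerDesign h2 hD hb, fun p hp => ?_⟩,
    nodup_kramerDesign h2 h3 hD, map_image_add_kramerDesign 1, ?_⟩
  · obtain ⟨x, y, hxy, rfl⟩ := card_eq_two.mp hp
    exact countP_pair_subset_kramerDesign h2 hD hxy
  · rintro ⟨B₁, B₂, hsum, hB₁, -⟩
    exact not_forall_countP_pair_eq_one_of_le_kramerDesign h2 h3 hD
      (hsum ▸ Multiset.le_add_right B₁ B₂) fun x y hxy => hB₁.2 _ (card_pair hxy)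
end

section
/- Let v ≥ 5 with v ≡ 1 or 5 (mod 6). If 1 ≤ α₁, α₂ ≤ (v−1)/2, k₁, k₂ ∈ ZMod v, and {k₁, k₁ + α₁, k₁ − α₁} = {k₂, k₂ + α₂, k₂ − α₂} as subsets of ZMod v, then α₁ = α₂ and k₁ = k₂. In other words, the blocks {k, k + α, k − α} (1 ≤ α ≤ (v−1)/2, k ∈ ZMod v) are pairwise distinct, so the cyclic three-fold triple system they form is simple. -/
/-!
For `a ≠ 0` with `2a ≠ 0` the block `{k, k + a, k - a}` has three elements summing to `3k`,
so when `3 ∤ v` the block determines its centre `k`. Two blocks with the same centre `k` then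
force `k + α₁ = k ± α₂`, i.e. `α₁ ≡ ±α₂ (mod v)`; as `0 < α₁ + α₂ < v`, only `α₁ = α₂` remains.
-/

open Finset

section AddCommGroup

variable {G : Type*} [AddCommGroup G] [DecidableEq G]

theorem sum_triple_add_sub {k a : G} (ha : a ≠ 0) (ha2 : a + a ≠ 0) :
    ∑ x ∈ ({k, k + a, k - a} : Finset G), x = 3 • k := by
  have hk : k ∉ ({k + a, k - a} : Finset G) := by
    simp only [mem_insert, mem_singleton, not_or]
    exact ⟨fun h => ha (add_eq_left.mp h.symm), fun h => ha (sub_eq_self.mp h.symm)⟩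
  have hka : k + a ∉ ({k - a} : Finset G) := by
    simp only [mem_singleton]
    intro h
    rw [sub_eq_add_neg, add_right_inj] at h
    exact ha2 (eq_neg_iff_add_eq_zero.mp h)
  rw [sum_insert hk, sum_insert hka, sum_singleton]
  abel

theorem center_eq_of_triple_eq (h3 : Function.Injective fun x : G => 3 • x) {k₁ k₂ a₁ a₂ : G}
    (ha₁ : a₁ ≠ 0) (ha₁2 : a₁ + a₁ ≠ 0) (ha₂ : a₂ ≠ 0) (ha₂2 : a₂ + a₂ ≠ 0)
    (heq : ({k₁, k₁ + a₁, k₁ - a₁} : Finset G) = {k₂, k₂ + a₂, k₂ - a₂}) : k₁ = k₂ :=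
  h3 <| show 3 • k₁ = 3 • k₂ by
    rw [← sum_triple_add_sub ha₁ ha₁2, ← sum_triple_add_sub ha₂ ha₂2, heq]

theorem eq_or_eq_neg_of_add_mem_triple {k a b : G} (ha : a ≠ 0)
    (hmem : k + a ∈ ({k, k + b, k - b} : Finset G)) : a = b ∨ a = -b := by
  simp only [mem_insert, mem_singleton, add_eq_left, add_right_inj, sub_eq_add_neg] at hmem
  tauto

end AddCommGroup

namespace ZMod

theorem natCast_ne_zero_of_pos_of_lt {a v : ℕ} (h0 : 0 < a) (hlt : a < v) : (a : ZMod v) ≠ 0 :=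
  fun h => absurd (Nat.le_of_dvd h0 ((natCast_eq_zero_iff a v).mp h)) (by omega)

theorem three_nsmul_injective {v : ℕ} (hv : ¬ 3 ∣ v) :
    Function.Injective fun x : ZMod v => 3 • x := by
  have h3 : IsUnit ((3 : ℕ) : ZMod v) :=
    (isUnit_iff_coprime 3 v).mpr (Nat.prime_three.coprime_iff_not_dvd.mpr hv)
  intro x y hxy
  simp only [nsmul_eq_mul] at hxy
  exact h3.mul_left_cancel (by exact_mod_cast hxy)

end ZMod

theorem kramer_blocks_pairwise_distinct_general (v : ℕ)
    (hmod : v % 6 = 1 ∨ v % 6 = 5)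
    (α₁ α₂ : ℕ) (hα₁ : 1 ≤ α₁) (hα₁' : α₁ ≤ (v - 1) / 2)
    (hα₂ : 1 ≤ α₂) (hα₂' : α₂ ≤ (v - 1) / 2) (k₁ k₂ : ZMod v)
    (heq : ({k₁, k₁ + (α₁ : ZMod v), k₁ - (α₁ : ZMod v)} : Finset (ZMod v)) =
           ({k₂, k₂ + (α₂ : ZMod v), k₂ - (α₂ : ZMod v)} : Finset (ZMod v))) :
    α₁ = α₂ ∧ k₁ = k₂ := by
  have hne : ∀ a : ℕ, 0 < a → a < v → (a : ZMod v) ≠ 0 := fun _ => ZMod.natCast_ne_zero_of_pos_of_lt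
  have hne₁ := hne α₁ (by omega) (by omega)
  have hne₂ := hne α₂ (by omega) (by omega)
  have hne₁2 : (α₁ : ZMod v) + α₁ ≠ 0 := by exact_mod_cast hne (α₁ + α₁) (by omega) (by omega)
  have hne₂2 : (α₂ : ZMod v) + α₂ ≠ 0 := by exact_mod_cast hne (α₂ + α₂) (by omega) (by omega)
  obtain rfl : k₁ = k₂ := center_eq_of_triple_eq (ZMod.three_nsmul_injective (by omega))
    hne₁ hne₁2 hne₂ hne₂2 heq
  refine ⟨?_, rfl⟩
  have hmem : k₁ + (α₁ : ZMod v) ∈ ({k₁, k₁ + (α₂ : ZMod v), k₁ - (α₂ : ZMod v)} : Finset _) :=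
    heq ▸ by simp
  rcases eq_or_eq_neg_of_add_mem_triple hne₁ hmem with h | h
  · simpa [ZMod.val_cast_of_lt (show α₁ < v by omega), ZMod.val_cast_of_lt (show α₂ < v by omega)]
      using congrArg ZMod.val h
  · exact absurd (by push_cast; rw [h, neg_add_cancel]) (hne (α₁ + α₂) (by omega) (by omega))

theorem kramer_blocks_pairwise_distinct (v : ℕ) (hv : 5 ≤ v)
    (hmod : v % 6 = 1 ∨ v % 6 = 5)
    (α₁ α₂ : ℕ) (hα₁ : 1 ≤ α₁) (hα₁' : α₁ ≤ (v - 1) / 2)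
    (hα₂ : 1 ≤ α₂) (hα₂' : α₂ ≤ (v - 1) / 2) (k₁ k₂ : ZMod v)
    (heq : ({k₁, k₁ + (α₁ : ZMod v), k₁ - (α₁ : ZMod v)} : Finset (ZMod v)) =
           ({k₂, k₂ + (α₂ : ZMod v), k₂ - (α₂ : ZMod v)} : Finset (ZMod v))) :
    α₁ = α₂ ∧ k₁ = k₂ :=
  kramer_blocks_pairwise_distinct_general v hmod α₁ α₂ hα₁ hα₁' hα₂ hα₂' k₁ k₂ heq
end

section
/- Let (a_i, b_i), 1 ≤ i ≤ n, be a Skolem sequence of order n ≥ 1 in pair form. Suppose there do not exist indices i₁, i₂ ∈ {1, …, n} (not necessarily distinct) such that, as integers, i₁ + i₂ = b_{i₂} and b_{i₁} + i₂ = 2n + 1. Then the blocks {k, i + k, b_i + k} ⊆ ZMod (2n+1), for 1 ≤ i ≤ n and k ∈ ZMod (2n+1), are pairwise distinct for distinct pairs (i, k); i.e., the developed cyclic three-fold triple system has no repeated block. -/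
/-!
Write `T i = {0, i, b i}` in `ZMod (2 * n + 1)`. Two developed blocks coincide exactly when
`T i + d = T j` for the shift `d = k - l`, and since `0 ∈ T i`, the shift is one of `0, j, b j`.
The numbers compared are sums of at most two of `i, j, b i, b j`, so they lie in `[0, 4n]`, and
a congruence modulo `2n + 1` between two of them is an equality or a difference of exactly
`2n + 1`. The shift `0` then forces `i = j`, the shift `j` produces the excluded solution
`(i₁, i₂) = (i, j)` and the shift `b j` the excluded solution `(j, i)`.
-/

/-- A Skolem sequence of order `n` in pair form. -/
def IsSkolem (n : ℕ) (a b : ℕ → ℕ) : Prop :=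
  (∀ i ∈ Finset.Icc 1 n, a i + i = b i) ∧
  (Finset.Icc 1 n).val.bind (fun i => {a i, b i}) = (Finset.Icc 1 (2 * n)).val

theorem IsSkolem.lt_and_le_two_mul {n : ℕ} {a b : ℕ → ℕ} (hs : IsSkolem n a b) :
    ∀ i ∈ Finset.Icc 1 n, i < b i ∧ b i ≤ 2 * n := by
  intro i hi
  have mem_range : ∀ x ∈ ({a i, b i} : Multiset ℕ), 1 ≤ x ∧ x ≤ 2 * n := fun x hx => by
    have : x ∈ (Finset.Icc 1 (2 * n)).val := hs.2 ▸ Multiset.mem_bind.2 ⟨i, hi, hx⟩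
    simpa using this
  have ha := mem_range (a i) (by simp)
  have hb := mem_range (b i) (by simp)
  have := hs.1 i hi
  omega

theorem ZMod.eq_or_eq_add_of_natCast_eq {m u v : ℕ} (hu : u < 2 * m) (hv : v < 2 * m)
    (h : (u : ZMod m) = v) : u = v ∨ u = v + m ∨ v = u + m := by
  have mod_cases : ∀ w < 2 * m, w % m = w ∨ m ≤ w ∧ w % m = w - m := fun w hw => by
    rcases lt_or_ge w m with hwm | hwm
    · exact .inl (Nat.mod_eq_of_lt hwm)
    · exact .inr ⟨hwm, by rw [Nat.mod_eq_sub_mod hwm, Nat.mod_eq_of_lt (by omega)]⟩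
  rw [ZMod.natCast_eq_natCast_iff'] at h
  rcases mod_cases u hu with hu' | hu' <;> rcases mod_cases v hv with hv' | hv' <;> omega

theorem Finset.pair_eq_pair_iff {α : Type*} [DecidableEq α] {x y z w : α} :
    ({x, y} : Finset α) = {z, w} ↔ x = z ∧ y = w ∨ x = w ∧ y = z := by
  rw [← Finset.coe_inj]
  push_cast
  exact Set.pair_eq_pair_iff

section Translate

variable {G : Type*} [AddCommGroup G] [DecidableEq G]

theorem triple_translate_eq_cases {x y x' y' k l : G} (hx : x ≠ 0) (hy : y ≠ 0) (hx' : x' ≠ 0)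
    (hy' : y' ≠ 0) (hxy' : x' ≠ y')
    (h : ({k, x + k, y + k} : Finset G) = {l, x' + l, y' + l}) :
    (k = l ∧ ({x, y} : Finset G) = {x', y'}) ∨ ({x + x', y + x'} : Finset G) = {0, y'} ∨
      ({x + y', y + y'} : Finset G) = {0, x'} := by
  have hd : ({k - l, x + (k - l), y + (k - l)} : Finset G) = {0, x', y'} := by
    simpa [Finset.image_insert, add_sub_assoc] using congrArg (Finset.image (· - l)) h
  have erase_shift :
      ({x + (k - l), y + (k - l)} : Finset G) = ({0, x', y'} : Finset G).erase (k - l) := by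
    rw [← hd, Finset.erase_insert]
    simp [hx, hy]
  have hmem : k - l ∈ ({0, x', y'} : Finset G) := hd ▸ Finset.mem_insert_self _ _
  simp only [Finset.mem_insert, Finset.mem_singleton] at hmem
  rcases hmem with hkl | hkl | hkl <;> rw [hkl] at erase_shift
  · refine .inl ⟨sub_eq_zero.1 hkl, ?_⟩
    simpa [Finset.erase_insert, hx', hy', eq_comm] using erase_shift
  · refine .inr (.inl ?_)
    simpa [Finset.erase_insert, Finset.erase_insert_of_ne, hx', hxy', Ne.symm hx'] using erase_shift
  · refine .inr (.inr ?_)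
    simpa [Finset.erase_insert, Finset.erase_insert_of_ne, hy', hxy', Ne.symm hy'] using erase_shift

end Translate

section SkolemBlock

variable {n : ℕ} {b : ℕ → ℕ} {i j : ℕ}

local notation "Z" => ZMod (2 * n + 1)

theorem natCast_ne_zero_and_ne (hb : ∀ i ∈ Finset.Icc 1 n, i < b i ∧ b i ≤ 2 * n)
    (hi : i ∈ Finset.Icc 1 n) : (i : Z) ≠ 0 ∧ (b i : Z) ≠ 0 ∧ (i : Z) ≠ b i := by
  have := hb i hi
  rw [Finset.mem_Icc] at hi
  refine ⟨fun h => ?_, fun h => ?_, fun h => ?_⟩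
  · have := ZMod.eq_or_eq_add_of_natCast_eq (v := 0) (by omega) (by omega) (mod_cast h)
    omega
  · have := ZMod.eq_or_eq_add_of_natCast_eq (v := 0) (by omega) (by omega) (mod_cast h)
    omega
  · have := ZMod.eq_or_eq_add_of_natCast_eq (by omega) (by omega) h
    omega

theorem eq_of_natCast_pair_eq (hb : ∀ i ∈ Finset.Icc 1 n, i < b i ∧ b i ≤ 2 * n)
    (hi : i ∈ Finset.Icc 1 n) (hj : j ∈ Finset.Icc 1 n)
    (h : ({(i : Z), (b i : Z)} : Finset Z) = {(j : Z), (b j : Z)}) : i = j := by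
  have := hb i hi
  have := hb j hj
  rw [Finset.pair_eq_pair_iff] at h
  rcases h with ⟨h₁, h₂⟩ | ⟨h₁, h₂⟩
  all_goals
    have := ZMod.eq_or_eq_add_of_natCast_eq (by omega) (by omega) h₁
    have := ZMod.eq_or_eq_add_of_natCast_eq (by omega) (by omega) h₂
    omega

theorem add_eq_of_natCast_pair_add_eq (hb : ∀ i ∈ Finset.Icc 1 n, i < b i ∧ b i ≤ 2 * n)
    (hi : i ∈ Finset.Icc 1 n) (hj : j ∈ Finset.Icc 1 n)
    (h : ({(i : Z) + j, (b i : Z) + j} : Finset Z) = {0, (b j : Z)}) :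
    i + j = b j ∧ b i + j = 2 * n + 1 := by
  have := hb i hi
  have := hb j hj
  rw [Finset.mem_Icc] at hi hj
  rw [Finset.pair_eq_pair_iff] at h
  rcases h with ⟨h₁, -⟩ | ⟨h₁, h₂⟩
  · have := ZMod.eq_or_eq_add_of_natCast_eq (u := i + j) (v := 0) (by omega) (by omega)
      (mod_cast h₁)
    omega
  · have := ZMod.eq_or_eq_add_of_natCast_eq (u := i + j) (by omega) (by omega) (mod_cast h₁)
    have := ZMod.eq_or_eq_add_of_natCast_eq (u := b i + j) (v := 0) (by omega) (by omega)
      (mod_cast h₂)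
    omega

theorem add_eq_of_natCast_pair_add_partner_eq
    (hb : ∀ i ∈ Finset.Icc 1 n, i < b i ∧ b i ≤ 2 * n)
    (hi : i ∈ Finset.Icc 1 n) (hj : j ∈ Finset.Icc 1 n)
    (h : ({(i : Z) + b j, (b i : Z) + b j} : Finset Z) = {0, (j : Z)}) :
    j + i = b i ∧ b j + i = 2 * n + 1 := by
  have := hb i hi
  have := hb j hj
  rw [Finset.mem_Icc] at hi hj
  rw [Finset.pair_eq_pair_iff] at h
  rcases h with ⟨h₁, h₂⟩ | ⟨h₁, h₂⟩
  · have := ZMod.eq_or_eq_add_of_natCast_eq (u := i + b j) (v := 0) (by omega) (by omega)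
      (mod_cast h₁)
    have := ZMod.eq_or_eq_add_of_natCast_eq (u := b i + b j) (by omega) (by omega) (mod_cast h₂)
    omega
  · have := ZMod.eq_or_eq_add_of_natCast_eq (u := i + b j) (by omega) (by omega) (mod_cast h₁)
    have := ZMod.eq_or_eq_add_of_natCast_eq (u := b i + b j) (v := 0) (by omega) (by omega)
      (mod_cast h₂)
    omega

end SkolemBlock

theorem no_repeated_block_of_no_solution_general (n : ℕ) (a b : ℕ → ℕ)
    (hs : IsSkolem n a b)
    (hcond : ¬ ∃ i₁ ∈ Finset.Icc 1 n, ∃ i₂ ∈ Finset.Icc 1 n,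
      i₁ + i₂ = b i₂ ∧ b i₁ + i₂ = 2 * n + 1) :
    ∀ i ∈ Finset.Icc 1 n, ∀ j ∈ Finset.Icc 1 n, ∀ k l : ZMod (2 * n + 1),
      ({k, (i : ZMod (2 * n + 1)) + k, (b i : ZMod (2 * n + 1)) + k} :
          Finset (ZMod (2 * n + 1))) =
      ({l, (j : ZMod (2 * n + 1)) + l, (b j : ZMod (2 * n + 1)) + l} :
          Finset (ZMod (2 * n + 1))) →
      i = j ∧ k = l := by
  intro i hi j hj k l h
  have hb := hs.lt_and_le_two_mul
  obtain ⟨hi₀, hbi₀, -⟩ := natCast_ne_zero_and_ne hb hi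
  obtain ⟨hj₀, hbj₀, hjbj⟩ := natCast_ne_zero_and_ne hb hj
  rcases triple_translate_eq_cases hi₀ hbi₀ hj₀ hbj₀ hjbj h with ⟨hkl, hp⟩ | hp | hp
  · exact ⟨eq_of_natCast_pair_eq hb hi hj hp, hkl⟩
  · exact (hcond ⟨i, hi, j, hj, add_eq_of_natCast_pair_add_eq hb hi hj hp⟩).elim
  · exact (hcond ⟨j, hj, i, hi, add_eq_of_natCast_pair_add_partner_eq hb hi hj hp⟩).elim

theorem no_repeated_block_of_no_solution (n : ℕ) (hn : 1 ≤ n) (a b : ℕ → ℕ)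
    (hs : IsSkolem n a b)
    (hcond : ¬ ∃ i₁ ∈ Finset.Icc 1 n, ∃ i₂ ∈ Finset.Icc 1 n,
      i₁ + i₂ = b i₂ ∧ b i₁ + i₂ = 2 * n + 1) :
    ∀ i ∈ Finset.Icc 1 n, ∀ j ∈ Finset.Icc 1 n, ∀ k l : ZMod (2 * n + 1),
      ({k, (i : ZMod (2 * n + 1)) + k, (b i : ZMod (2 * n + 1)) + k} :
          Finset (ZMod (2 * n + 1))) =
      ({l, (j : ZMod (2 * n + 1)) + l, (b j : ZMod (2 * n + 1)) + l} :
          Finset (ZMod (2 * n + 1))) →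
      i = j ∧ k = l :=
  no_repeated_block_of_no_solution_general n a b hs hcond
end
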